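/- arXiv:1812.04911 — 4 statements merged into one kernel-verified Lean document; each statement's English description precedes it below -/
import Mathlib

section
/- (Tverberg's theorem) Let d ≥ 1 and r ≥ 1 be integers and let X be a finite set of at least (d+1)(r-1)+1 points in ℝ^d. Then X can be partitioned into r pairwise disjoint sets X_1, …, X_r whose convex hulls all have a point in common, i.e., there exists a point o ∈ ℝ^d with o ∈ conv(X_i) for every i = 1, …, r. -/
/-!
Sarkaria's tensor trick reduces Tverberg's theorem to Bárány's colorful Carathéodory theorem.
Lift each point `x` to `x̂ = (1, x) ∈ ℝ^(d+1)` and pair it with the color class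
`{x̂ ⊗ u j | j}` in `ℝ^(d+1) ⊗ ℝ^(r-1)`, where `u 0, …, u (r-1)` sum to zero and satisfy no
other linear relation, so that the origin is the barycentre of each class. There are more than
`(d+1)(r-1)` classes, so some choice `x̂ ⊗ u (c x)` of one vector per class has the origin in its
convex hull. Grouping that convex combination by color, `∑ j, (∑_{c x = j} λ x • x̂) ⊗ u j = 0`
forces all the vectors `∑_{c x = j} λ x • x̂` to agree: the color classes carry the same mass and
the same barycentre, which is a Tverberg point.

For colorful Carathéodory, take a colorful choice whose convex hull is nearest to the origin and
let `p` be the nearest point. If `p ≠ 0`, then `p` is a positive combination of affinely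
independent points on the supporting hyperplane `⟪p, ·⟫ = ‖p‖²`, which misses the origin; there
are at most `dim` of them, so some color is unused. As the origin lies in the hull of that color, the
color has a point `b` with `⟪p, b⟫ ≤ 0`; swapping `b` in yields a hull containing both `p` and
`b`, hence points closer to the origin than `p`.
-/

open Set Finset Module RealInnerProductSpace

theorem exists_weights_of_mem_convexHull_range {R E ι : Type*} [Field R] [LinearOrder R]
    [IsStrictOrderedRing R] [AddCommGroup E] [Module R E] [Fintype ι] {v : ι → E} {x : E}
    (hx : x ∈ convexHull R (range v)) :
    ∃ w : ι → R, (∀ i, 0 ≤ w i) ∧ ∑ i, w i = 1 ∧ ∑ i, w i • v i = x := by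
  classical
  rw [convexHull_range_eq_exists_affineCombination] at hx
  obtain ⟨t, w, hw0, hw1, rfl⟩ := hx
  refine ⟨fun i => if i ∈ t then w i else 0, fun i => ?_, ?_, ?_⟩
  · dsimp only
    split_ifs with hi
    exacts [hw0 i hi, le_rfl]
  · simpa [Finset.sum_ite_mem] using hw1
  · simp [ite_smul, Finset.sum_ite_mem, t.affineCombination_eq_linear_combination v w hw1]

section ColorfulCaratheodory

variable {V : Type*} [NormedAddCommGroup V] [InnerProductSpace ℝ V]

theorem norm_sq_le_inner_of_isMinOn_norm {K : Set V} (hK : Convex ℝ K) {p w : V}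
    (hp : p ∈ K) (hmin : IsMinOn (‖·‖) K p) (hw : w ∈ K) : ‖p‖ ^ 2 ≤ ⟪p, w⟫ := by
  have : Nonempty K := ⟨⟨p, hp⟩⟩
  have hinf : ‖0 - p‖ = ⨅ x : K, ‖0 - (x : V)‖ := by
    refine le_antisymm (le_ciInf fun x => by simpa using hmin x.2) (ciInf_le ?_ (⟨p, hp⟩ : K))
    exact ⟨0, by rintro _ ⟨x, rfl⟩; positivity⟩
  have := (norm_eq_iInf_iff_real_inner_le_zero hK hp).mp hinf w hw
  rw [zero_sub, inner_neg_left, inner_sub_right, real_inner_self_eq_norm_sq] at this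
  linarith

theorem exists_inner_nonpos_of_zero_mem_convexHull {s : Set V} (h : (0 : V) ∈ convexHull ℝ s)
    (p : V) : ∃ b ∈ s, ⟪p, b⟫ ≤ 0 := by
  by_contra! hpos
  have hconvex : Convex ℝ {x : V | 0 < ⟪p, x⟫} :=
    convex_halfSpace_gt (innerₛₗ ℝ p).isLinear 0
  have : (0 : ℝ) < ⟪p, 0⟫ := convexHull_min hpos hconvex h
  simp at this

theorem AffineIndependent.card_le_finrank_of_inner_eq [FiniteDimensional ℝ V] {ι : Type*}
    [Fintype ι] {z : ι → V} (hz : AffineIndependent ℝ z) {p : V} {c : ℝ} (hc : c ≠ 0)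
    (h : ∀ i, ⟪p, z i⟫ = c) : Fintype.card ι ≤ finrank ℝ V := by
  have hle : Fintype.card ι ≤ finrank ℝ V + 1 :=
    hz.card_le_finrank_succ.trans (Nat.succ_le_succ (Submodule.finrank_le _))
  refine Nat.le_of_lt_succ (hle.lt_of_ne fun heq => hc ?_)
  obtain ⟨w, hw, hw0⟩ := eq_affineCombination_of_mem_affineSpan_of_fintype
    ((hz.affineSpan_eq_top_iff_card_eq_finrank_add_one.mpr heq).symm ▸
      AffineSubspace.mem_top ℝ V 0)
  rw [Finset.affineCombination_eq_linear_combination _ _ _ hw] at hw0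
  have := congrArg (⟪p, ·⟫) hw0
  simp only [inner_zero_right, inner_sum, real_inner_smul_right, h, ← Finset.sum_mul, hw,
    one_mul] at this
  exact this.symm

theorem exists_finset_card_le_finrank_of_isMinOn_norm [FiniteDimensional ℝ V] {s : Set V}
    {p : V} (hp0 : p ≠ 0) (hp : p ∈ convexHull ℝ s) (hmin : IsMinOn (‖·‖) (convexHull ℝ s) p) :
    ∃ t : Finset V, ↑t ⊆ s ∧ #t ≤ finrank ℝ V ∧ p ∈ convexHull ℝ (t : Set V) := by
  classical
  obtain ⟨ι, _, z, w, hzs, hz, hw0, hw1, hwz⟩ := eq_pos_convex_span_of_mem_convexHull hp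
  have hge (i : ι) : ‖p‖ ^ 2 ≤ ⟪p, z i⟫ := norm_sq_le_inner_of_isMinOn_norm
    (convex_convexHull ℝ s) hp hmin (subset_convexHull ℝ s (hzs (mem_range_self i)))
  -- The `z i` lie on one side of the supporting hyperplane `⟪p, ·⟫ = ‖p‖ ^ 2` and their
  -- positive combination `p` lies on it, so they all lie on it.
  have hsum : ∑ i, w i * (⟪p, z i⟫ - ‖p‖ ^ 2) = 0 := by
    simp only [mul_sub, Finset.sum_sub_distrib, ← Finset.sum_mul, hw1, ← real_inner_smul_right,
      ← inner_sum, hwz, real_inner_self_eq_norm_sq, one_mul, sub_self]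
  have heq (i : ι) : ⟪p, z i⟫ = ‖p‖ ^ 2 := by
    have := (Finset.sum_eq_zero_iff_of_nonneg fun j _ =>
      mul_nonneg (hw0 j).le (sub_nonneg.mpr (hge j))).mp hsum i (mem_univ i)
    linarith [(mul_eq_zero.mp this).resolve_left (hw0 i).ne']
  refine ⟨univ.image z, by simpa using hzs, card_image_le.trans ?_, ?_⟩
  · exact (card_univ (α := ι)).trans_le
      (hz.card_le_finrank_of_inner_eq (by positivity) heq)
  · exact mem_convexHull_of_exists_fintype w z (fun i => (hw0 i).le) hw1 (by simp) hwz

theorem exists_subset_image_compl_of_card_lt {ι α : Type*} [Fintype ι] {g : ι → α}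
    {t : Finset α} (ht : ↑t ⊆ range g) (hcard : #t < Fintype.card ι) :
    ∃ i₀, ↑t ⊆ g '' {i₀}ᶜ := by
  classical
  have : Nonempty ι := Fintype.card_pos_iff.mp (t.card.zero_le.trans_lt hcard)
  obtain ⟨i₀, -, hi₀⟩ := exists_mem_notMem_of_card_lt_card (s := t.image (Function.invFun g))
    (t := univ) (card_image_le.trans_lt hcard)
  exact ⟨i₀, fun x hx => ⟨Function.invFun g x, fun h => hi₀ (h ▸ mem_image_of_mem _ hx),
    Function.invFun_eq (ht hx)⟩⟩

theorem exists_colorful_zero_mem_convexHull [FiniteDimensional ℝ V] {ι : Type*} [Fintype ι]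
    (hι : finrank ℝ V < Fintype.card ι) (A : ι → Finset V)
    (hA : ∀ i, (0 : V) ∈ convexHull ℝ (A i : Set V)) :
    ∃ g : ι → V, (∀ i, g i ∈ A i) ∧ (0 : V) ∈ convexHull ℝ (range g) := by
  classical
  have : Nonempty ι := Fintype.card_pos_iff.mp (Nat.zero_lt_of_lt hι)
  have hne : (Fintype.piFinset A).Nonempty := Fintype.piFinset_nonempty.mpr fun i => by
    simpa using (convexHull_nonempty_iff (𝕜 := ℝ)).mp ⟨0, hA i⟩
  obtain ⟨g, hgA, hg_min⟩ := (Fintype.piFinset A).exists_min_image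
    (fun g => Metric.infDist 0 (convexHull ℝ (range g))) hne
  rw [Fintype.mem_piFinset] at hgA
  obtain ⟨p, hp, hp_dist⟩ := ((finite_range g).isCompact_convexHull ℝ).exists_infDist_eq_dist
    ((range_nonempty g).convexHull) 0
  have hmin (g' : ι → V) (hg'A : ∀ i, g' i ∈ A i) (hp' : p ∈ convexHull ℝ (range g')) :
      IsMinOn (‖·‖) (convexHull ℝ (range g')) p := fun w hw => by
    have := hg_min g' (Fintype.mem_piFinset.mpr hg'A)
    simp only [hp_dist, dist_zero_left] at this
    simpa using this.trans (Metric.infDist_le_dist_of_mem hw)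
  refine ⟨g, hgA, ?_⟩
  by_contra hg0
  have hp0 : p ≠ 0 := by rintro rfl; exact hg0 hp
  obtain ⟨t, hts, htcard, hpt⟩ :=
    exists_finset_card_le_finrank_of_isMinOn_norm hp0 hp (hmin g hgA hp)
  obtain ⟨i₀, hi₀⟩ := exists_subset_image_compl_of_card_lt hts (htcard.trans_lt hι)
  obtain ⟨b, hbA, hb⟩ := exists_inner_nonpos_of_zero_mem_convexHull (hA i₀) p
  set g' := Function.update g i₀ b
  have hg'A (i : ι) : g' i ∈ A i := by
    rcases eq_or_ne i i₀ with rfl | hi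
    · simpa [g'] using hbA
    · simpa [g', hi] using hgA i
  have hpg' : p ∈ convexHull ℝ (range g') := convexHull_mono (hi₀.trans <| by
    rintro _ ⟨i, hi, rfl⟩; exact ⟨i, Function.update_of_ne hi _ _⟩) hpt
  have hbg' : b ∈ convexHull ℝ (range g') :=
    subset_convexHull ℝ _ ⟨i₀, Function.update_self _ _ _⟩
  have := norm_sq_le_inner_of_isMinOn_norm (convex_convexHull ℝ _) hpg' (hmin g' hg'A hpg') hbg'
  exact hp0 (norm_eq_zero.mp (by nlinarith [norm_nonneg p]))

end ColorfulCaratheodory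

section Sarkaria

variable {m s : ℕ}

/-- The tensor `y ⊗ u j ∈ ℝ^m ⊗ ℝ^s`, where `u 0, …, u (s-1)` is the standard basis of `ℝ^s` and
`u s = -(u 0 + ⋯ + u (s-1))`: up to scalars, `∑ j, u j = 0` is the only linear relation among
the `u j`. -/
def sarkaria (y : Fin m → ℝ) (j : Fin (s + 1)) : EuclideanSpace ℝ (Fin s × Fin m) :=
  WithLp.toLp 2 fun ka =>
    (if j = ka.1.castSucc then y ka.2 else 0) - if j = Fin.last s then y ka.2 else 0

theorem smul_sarkaria (a : ℝ) (y : Fin m → ℝ) (j : Fin (s + 1)) :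
    a • sarkaria y j = sarkaria (a • y) j := by
  ext ka
  simp [sarkaria, mul_sub]

theorem sum_sarkaria (y : Fin m → ℝ) : ∑ j, sarkaria (s := s) y j = 0 := by
  ext ka
  simp [sarkaria, Finset.sum_sub_distrib]

theorem zero_mem_convexHull_range_sarkaria (y : Fin m → ℝ) :
    (0 : EuclideanSpace ℝ (Fin s × Fin m)) ∈ convexHull ℝ (range (sarkaria y)) := by
  refine mem_convexHull_of_exists_fintype (fun _ => ((s : ℝ) + 1)⁻¹) (sarkaria y)
    (fun _ => by positivity) ?_ mem_range_self (by rw [← smul_sum, sum_sarkaria, smul_zero])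
  simp only [sum_const, card_univ, Fintype.card_fin, nsmul_eq_mul]
  push_cast
  field_simp

theorem fiberwise_sum_eq_of_sum_sarkaria_eq_zero {ι : Type*} [Fintype ι] (y : ι → Fin m → ℝ)
    (c : ι → Fin (s + 1)) (h : ∑ i, sarkaria (y i) (c i) = 0) (j : Fin (s + 1)) :
    ∑ i with c i = j, y i = ∑ i with c i = Fin.last s, y i := by
  induction j using Fin.lastCases with
  | last => rfl
  | cast k =>
    funext a
    have := congrArg (· (k, a)) h
    simp only [sarkaria, WithLp.ofLp_sum, Finset.sum_apply, sum_sub_distrib, PiLp.zero_apply,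
      sum_filter] at this ⊢
    linarith

theorem sum_smul_cons_one {d : ℕ} {ι : Type*} (t : Finset ι) (l : ι → ℝ)
    (q : ι → EuclideanSpace ℝ (Fin d)) :
    ∑ i ∈ t, l i • (Fin.cons 1 ⇑(q i) : Fin (d + 1) → ℝ) =
      Fin.cons (∑ i ∈ t, l i) ⇑(∑ i ∈ t, l i • q i) := by
  ext a
  cases a using Fin.cases <;> simp

end Sarkaria

theorem exists_coloring_forall_mem_convexHull {d s : ℕ} {ι : Type*} [Fintype ι]
    (q : ι → EuclideanSpace ℝ (Fin d)) (hcard : s * (d + 1) < Fintype.card ι) :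
    ∃ (c : ι → Fin (s + 1)) (o : EuclideanSpace ℝ (Fin d)),
      ∀ j, o ∈ convexHull ℝ (q '' {i | c i = j}) := by
  classical
  let lift (i : ι) : Fin (d + 1) → ℝ := Fin.cons 1 ⇑(q i)
  obtain ⟨g, hgA, hg0⟩ := exists_colorful_zero_mem_convexHull (by simpa using hcard)
    (fun i => univ.image (sarkaria (s := s) (lift i)))
    (fun i => by simpa using zero_mem_convexHull_range_sarkaria (lift i))
  choose c hc using fun i => by simpa using hgA i
  obtain ⟨l, hl0, hl1, hlg⟩ := exists_weights_of_mem_convexHull_range hg0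
  have hclass (j : Fin (s + 1)) :
      ∑ i with c i = j, l i = ∑ i with c i = Fin.last s, l i ∧
        ∑ i with c i = j, l i • q i = ∑ i with c i = Fin.last s, l i • q i := by
    simpa only [lift, sum_smul_cons_one, Fin.cons_inj, ← WithLp.ext_iff] using
      fiberwise_sum_eq_of_sum_sarkaria_eq_zero (fun i => l i • lift i) c
        (by simpa only [← smul_sarkaria, hc] using hlg) j
  have hpos : 0 < ∑ i with c i = Fin.last s, l i := by
    have := Finset.sum_fiberwise univ c l
    simp only [(hclass _).1, sum_const, card_univ, Fintype.card_fin, hl1, nsmul_eq_mul] at this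
    nlinarith
  refine ⟨c, (univ.filter fun i => c i = Fin.last s).centerMass l q, fun j => ?_⟩
  have hcm : (univ.filter fun i => c i = j).centerMass l q =
      (univ.filter fun i => c i = Fin.last s).centerMass l q := by
    simp only [Finset.centerMass, (hclass j).1, (hclass j).2]
  rw [← hcm]
  exact Finset.centerMass_mem_convexHull _ (fun i _ => hl0 i) ((hclass j).1 ▸ hpos)
    (fun i hi => ⟨i, by simpa using hi, rfl⟩)

theorem tverberg_general (d r : ℕ) (hr : 1 ≤ r)
    (X : Finset (EuclideanSpace ℝ (Fin d)))
    (hcard : (d + 1) * (r - 1) + 1 ≤ X.card) :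
    ∃ P : Fin r → Finset (EuclideanSpace ℝ (Fin d)),
      (∀ i j, i ≠ j → Disjoint (P i) (P j)) ∧
      (X : Set (EuclideanSpace ℝ (Fin d))) = ⋃ i, ↑(P i) ∧
      ∃ o : EuclideanSpace ℝ (Fin d),
        ∀ i, o ∈ convexHull ℝ (↑(P i) : Set (EuclideanSpace ℝ (Fin d))) := by
  classical
  obtain ⟨s, rfl⟩ : ∃ s, r = s + 1 := ⟨r - 1, by omega⟩
  rw [Nat.add_sub_cancel] at hcard
  obtain ⟨c, o, ho⟩ := exists_coloring_forall_mem_convexHull (s := s)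
    (fun x : X => (x : EuclideanSpace ℝ (Fin d)))
    (by rw [Fintype.card_coe]; linarith [mul_comm s (d + 1)])
  let color (x : EuclideanSpace ℝ (Fin d)) : Fin (s + 1) := if hx : x ∈ X then c ⟨x, hx⟩ else 0
  refine ⟨fun j => X.filter (color · = j), fun i j hij => ?_, ?_, o, fun j => ?_⟩
  · exact disjoint_filter_filter' _ _ fun _ hi hj x hx => hij ((hi x hx).symm.trans (hj x hx))
  · ext x
    simp
  · refine convexHull_mono ?_ (ho j)
    rintro _ ⟨⟨x, hx⟩, hxj, rfl⟩
    simpa [color, hx] using hxj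

/-- **Tverberg's theorem.** Any set of at least `(d+1)(r-1)+1` points in `ℝ^d`
can be partitioned into `r` pairwise disjoint sets whose convex hulls share a
common point. -/
theorem tverberg (d r : ℕ) (hd : 1 ≤ d) (hr : 1 ≤ r)
    (X : Finset (EuclideanSpace ℝ (Fin d)))
    (hcard : (d + 1) * (r - 1) + 1 ≤ X.card) :
    ∃ P : Fin r → Finset (EuclideanSpace ℝ (Fin d)),
      (∀ i j, i ≠ j → Disjoint (P i) (P j)) ∧
      (X : Set (EuclideanSpace ℝ (Fin d))) = ⋃ i, ↑(P i) ∧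
      ∃ o : EuclideanSpace ℝ (Fin d),
        ∀ i, o ∈ convexHull ℝ (↑(P i) : Set (EuclideanSpace ℝ (Fin d))) :=
  tverberg_general d r hr X hcard
end

section
/- Let d ≥ 1 and r ≥ 1 be integers and let X be a finite set of points in ℝ^d with (d+1)(r-1)+1 ≤ |X| ≤ (d+1)r. Then X can be partitioned into r pairwise disjoint sets X_1, …, X_r, each of size at most d+1, whose convex hulls all have a point in common. -/
/-!
Sarkaria's tensor trick reduces Tverberg's theorem for `(d + 1) m + 1` points to Bárány's colorful
Carathéodory theorem in `(ℝ^d × ℝ)^m`, a space of dimension `(d + 1) m`. Each point `x` gives the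
color class `{(x, 1) ⊗ v k}`, where `v 0, …, v m` span `ℝ^m` with the single relation
`∑ k, v k = 0`, so `0` lies in the hull of every class. A colorful choice `k = j x` with `0` in its
convex hull, grouped by `k`, is a relation `∑ k, z k ⊗ v k = 0`; hence all the `z k` are equal,
which says that the parts `{x | j x = k}` carry equal total weight and have equal centres of mass.

Colorful Carathéodory: take the colorful choice whose hull is nearest to `0`, with nearest point
`p ≠ 0`. The chosen points spanning `p` lie on the supporting hyperplane `⟪p, ·⟫ = ‖p‖²`, so at most
`dim E` of them are needed and some color `i₀` is free; a point of color `i₀` with `⟪p, s⟫ ≤ 0` exists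
and swapping it in gives a hull closer to `0`.

Finally Carathéodory shrinks each part to at most `d + 1` points around the common point, and the
remaining points fill up parts that still have room, as `|X| ≤ (d + 1) r`.
-/

open Finset Module Set
open scoped RealInnerProductSpace

lemma mem_convexHull_range_iff_exists_stdSimplex {R E ι : Type*} [Field R] [LinearOrder R]
    [IsStrictOrderedRing R] [AddCommGroup E] [Module R E] [Fintype ι] {v : ι → E} {x : E} :
    x ∈ convexHull R (range v) ↔ ∃ w ∈ stdSimplex R ι, ∑ i, w i • v i = x := by
  classical
  have hv : range v = Fintype.linearCombination R v '' range fun i => Pi.single i 1 := by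
    rw [← range_comp]; congr 1; ext i; simp
  rw [hv, ← LinearMap.image_convexHull, convexHull_rangle_single_eq_stdSimplex]
  simp [Fintype.linearCombination_apply]

lemma exists_finset_card_le_finrank_succ_of_mem_convexHull {𝕜 E : Type*} [Field 𝕜]
    [LinearOrder 𝕜] [IsStrictOrderedRing 𝕜] [AddCommGroup E] [Module 𝕜 E] [FiniteDimensional 𝕜 E]
    {s : Set E} {x : E} (hx : x ∈ convexHull 𝕜 s) :
    ∃ t : Finset E, ↑t ⊆ s ∧ #t ≤ finrank 𝕜 E + 1 ∧ x ∈ convexHull 𝕜 (t : Set E) := by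
  rw [convexHull_eq_union] at hx
  simp only [mem_iUnion] at hx
  obtain ⟨t, hts, ht, hxt⟩ := hx
  refine ⟨t, hts, ?_, hxt⟩
  simpa using ht.card_le_finrank_succ.trans (by gcongr; exact Submodule.finrank_le _)

section InnerProductSpace

variable {E : Type*} [NormedAddCommGroup E] [InnerProductSpace ℝ E]

lemma norm_sq_le_inner_of_forall_norm_le {K : Set E} (hK : Convex ℝ K) {p : E} (hp : p ∈ K)
    (hmin : ∀ y ∈ K, ‖p‖ ≤ ‖y‖) {y : E} (hy : y ∈ K) : ‖p‖ ^ 2 ≤ ⟪p, y⟫ := by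
  have : ‖0 - p‖ = ⨅ w : K, ‖0 - (w : E)‖ := by
    have : Nonempty K := ⟨⟨p, hp⟩⟩
    refine le_antisymm (le_ciInf fun w => by simpa using hmin w w.2) ?_
    exact ciInf_le (f := fun w : K => ‖0 - (w : E)‖) ⟨0, by rintro _ ⟨w, rfl⟩; positivity⟩ ⟨p, hp⟩
  have h := (norm_eq_iInf_iff_real_inner_le_zero hK hp).1 this y hy
  rw [zero_sub, inner_neg_left, inner_sub_right, real_inner_self_eq_norm_sq] at h
  linarith

variable [FiniteDimensional ℝ E]

lemma exists_mem_convexHull_image_ne {ι : Type*} [Fintype ι]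
    (hcard : finrank ℝ E < Fintype.card ι) {g : ι → E} {p : E}
    (hp : p ∈ convexHull ℝ (range g)) (hp0 : p ≠ 0)
    (hsupp : ∀ i, ‖p‖ ^ 2 ≤ ⟪p, g i⟫) : ∃ i₀, p ∈ convexHull ℝ (g '' {i | i ≠ i₀}) := by
  obtain ⟨κ, _, z, w, hzg, hz, hw0, hw1, hwp⟩ := eq_pos_convex_span_of_mem_convexHull hp
  choose σ hσ using fun k => hzg ⟨k, rfl⟩
  -- The `z k` lie on the supporting hyperplane `⟪p, ·⟫ = ‖p‖²`, which avoids `0`.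
  have hH : ∀ k, ⟪p, z k⟫ = ‖p‖ ^ 2 := by
    have hsum : ∑ k, w k * (⟪p, z k⟫ - ‖p‖ ^ 2) = 0 := by
      simp only [mul_sub, sum_sub_distrib, ← sum_mul, hw1, one_mul, ← real_inner_smul_right,
        ← inner_sum, hwp, real_inner_self_eq_norm_sq, sub_self]
    intro k
    have := (sum_eq_zero_iff_of_nonneg fun k _ =>
      mul_nonneg (hw0 k).le (sub_nonneg.2 (hσ k ▸ hsupp (σ k)))).1 hsum k (mem_univ k)
    linarith [(mul_eq_zero.1 this).resolve_left (hw0 k).ne']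
  have hκ : Fintype.card κ ≤ finrank ℝ E := by
    by_contra! hκ
    have htop := hz.affineSpan_eq_top_iff_card_eq_finrank_add_one.2
      (le_antisymm (hz.card_le_finrank_succ.trans (by gcongr; exact Submodule.finrank_le _)) hκ)
    obtain ⟨c, hc1, hc0⟩ :=
      eq_affineCombination_of_mem_affineSpan_of_fintype (htop ▸ AffineSubspace.mem_top ℝ E 0)
    rw [affineCombination_eq_linear_combination _ _ _ hc1] at hc0
    have := congrArg (⟪p, ·⟫) hc0
    simp only [inner_zero_right, inner_sum, real_inner_smul_right, hH, ← sum_mul, hc1,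
      one_mul] at this
    exact hp0 (by simpa using this.symm)
  obtain ⟨i₀, hi₀⟩ : ∃ i₀, i₀ ∉ range σ := by
    by_contra! h
    exact (hκ.trans_lt hcard).not_ge (Fintype.card_le_of_surjective σ h)
  refine ⟨i₀, mem_convexHull_of_exists_fintype w z (fun k => (hw0 k).le) hw1 ?_ hwp⟩
  exact fun k => ⟨σ k, fun h => hi₀ ⟨k, h⟩, hσ k⟩

theorem colorful_caratheodory_of_finite {ι : Type*} [Fintype ι]
    (hcard : finrank ℝ E < Fintype.card ι) {S : ι → Set E} (hS : ∀ i, (S i).Finite)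
    (h0 : ∀ i, (0 : E) ∈ convexHull ℝ (S i)) :
    ∃ g : ι → E, (∀ i, g i ∈ S i) ∧ (0 : E) ∈ convexHull ℝ (range g) := by
  classical
  have hne : (pi univ S).Nonempty :=
    univ_pi_nonempty_iff.2 fun i => convexHull_nonempty_iff.1 ⟨0, h0 i⟩
  obtain ⟨g, hgS, hgmin⟩ := (pi univ S).exists_min_image
    (fun g => Metric.infDist 0 (convexHull ℝ (range g))) (Set.Finite.pi hS) hne
  refine ⟨g, fun i => hgS i (mem_univ i), ?_⟩
  by_contra h0g
  have : Nonempty ι := Fintype.card_pos_iff.1 (by omega)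
  have hK := (finite_range g).isCompact_convexHull (𝕜 := ℝ)
  obtain ⟨p, hpK, hpd⟩ :=
    hK.exists_infDist_eq_dist (convexHull_nonempty_iff.2 (range_nonempty g)) 0
  rw [dist_zero_left] at hpd
  have hmin : ∀ g' ∈ pi univ S, ∀ y ∈ convexHull ℝ (range g'), ‖p‖ ≤ ‖y‖ := fun g' hg' y hy =>
    hpd ▸ (hgmin g' hg').trans (by simpa using Metric.infDist_le_dist_of_mem (x := 0) hy)
  have hp0 : p ≠ 0 := fun h => h0g (h ▸ hpK)
  obtain ⟨i₀, hpi₀⟩ := exists_mem_convexHull_image_ne hcard hpK hp0 fun i =>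
    norm_sq_le_inner_of_forall_norm_le (convex_convexHull ℝ _) hpK (hmin g hgS)
      (subset_convexHull ℝ _ ⟨i, rfl⟩)
  obtain ⟨s, hsS, hs⟩ := (innerₛₗ ℝ p).concaveOn convex_univ |>.exists_le_of_mem_convexHull
    (subset_univ _) (h0 i₀)
  set g' := Function.update g i₀ s
  have hg' : g' ∈ pi univ S := fun i _ => by
    rcases eq_or_ne i i₀ with rfl | hi
    · simpa [g'] using hsS
    · simpa [g', hi] using hgS i (mem_univ i)
  have hpK' : p ∈ convexHull ℝ (range g') := convexHull_mono (by
    rintro _ ⟨i, hi, rfl⟩; exact ⟨i, Function.update_of_ne hi _ _⟩) hpi₀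
  have := norm_sq_le_inner_of_forall_norm_le (convex_convexHull ℝ _) hpK' (hmin g' hg')
    (subset_convexHull ℝ _ ⟨i₀, Function.update_self i₀ s g⟩)
  simp only [innerₛₗ_apply_apply, inner_zero_right] at hs
  exact hp0 (by nlinarith [norm_nonneg p, norm_pos_iff.2 hp0])

end InnerProductSpace

theorem colorful_caratheodory {V : Type*} [AddCommGroup V] [Module ℝ V] [FiniteDimensional ℝ V]
    {ι : Type*} [Fintype ι] (hcard : finrank ℝ V < Fintype.card ι) {S : ι → Set V}
    (h0 : ∀ i, (0 : V) ∈ convexHull ℝ (S i)) :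
    ∃ g : ι → V, (∀ i, g i ∈ S i) ∧ (0 : V) ∈ convexHull ℝ (range g) := by
  choose T hTS hT0 using fun i => by
    simpa only [convexHull_eq_union_convexHull_finite_subsets (S i), mem_iUnion] using h0 i
  let e : V ≃ₗ[ℝ] EuclideanSpace ℝ (Fin (finrank ℝ V)) := LinearEquiv.ofFinrankEq _ _ (by simp)
  obtain ⟨g, hgT, hg0⟩ := colorful_caratheodory_of_finite (S := fun i => e '' T i)
    (by simpa using hcard) (fun i => (T i).finite_toSet.image e) fun i => by
      rw [← LinearEquiv.coe_coe, ← LinearMap.image_convexHull]; exact ⟨0, hT0 i, map_zero e⟩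
  refine ⟨fun i => e.symm (g i), fun i => hTS i ?_, ?_⟩
  · obtain ⟨y, hy, hyg⟩ := hgT i
    simpa [← hyg] using hy
  · rw [range_comp', ← LinearEquiv.coe_coe, ← LinearMap.image_convexHull]
    exact ⟨0, hg0, map_zero _⟩

section Sarkaria

variable {V : Type*} [AddCommGroup V] [Module ℝ V] {m : ℕ}

/-- `sarkariaLift k w = w ⊗ v k`, where `v 0, …, v m ∈ ℝᵐ` are `e 0, …, e (m - 1)` and
`-(e 0 + ⋯ + e (m - 1))`: affinely independent vectors whose only linear relations are
the multiples of `∑ k, v k = 0`. -/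
def sarkariaLift (k : Fin (m + 1)) : V →ₗ[ℝ] Fin m → V :=
  Fin.lastCases (-LinearMap.pi fun _ => LinearMap.id) (fun b => LinearMap.single ℝ (fun _ => V) b) k

@[simp]
lemma sarkariaLift_castSucc (b : Fin m) (w : V) : sarkariaLift b.castSucc w = Pi.single b w := by
  simp [sarkariaLift]

@[simp]
lemma sarkariaLift_last (w : V) : sarkariaLift (Fin.last m) w = fun _ => -w := by
  ext; simp [sarkariaLift]

lemma sum_sarkariaLift (w : V) : ∑ k : Fin (m + 1), sarkariaLift k w = 0 := by
  ext b
  simp [Fin.sum_univ_castSucc, Finset.sum_apply, Pi.single_apply]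

lemma eq_last_of_sum_sarkariaLift_eq_zero {z : Fin (m + 1) → V}
    (h : ∑ k, sarkariaLift k (z k) = 0) (k : Fin (m + 1)) : z k = z (Fin.last m) := by
  induction k using Fin.lastCases with
  | last => rfl
  | cast b =>
    have := congrFun h b
    simp only [Fin.sum_univ_castSucc, sarkariaLift_castSucc, sarkariaLift_last, Finset.sum_apply,
      Pi.single_apply, Finset.sum_ite_eq, Finset.mem_univ, if_true, Pi.zero_apply] at this
    exact neg_add_eq_zero.1 (by rwa [add_comm] at this) |>.symm

theorem exists_tverberg_partition [FiniteDimensional ℝ V] {ι : Type*} [Fintype ι] (x : ι → V)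
    (hcard : (finrank ℝ V + 1) * m < Fintype.card ι) :
    ∃ (j : ι → Fin (m + 1)) (o : V), ∀ k, o ∈ convexHull ℝ (x '' {i | j i = k}) := by
  have hdim : finrank ℝ (Fin m → V × ℝ) < Fintype.card ι := by
    simpa [Module.finrank_pi_fintype, Module.finrank_prod, mul_comm] using hcard
  obtain ⟨g, hg, hg0⟩ := colorful_caratheodory hdim
    (S := fun i => range fun k => sarkariaLift k (x i, (1 : ℝ))) fun i => by
      refine mem_convexHull_range_iff_exists_stdSimplex.2
        ⟨fun _ => ((m : ℝ) + 1)⁻¹, ⟨fun _ => by positivity, ?_⟩, ?_⟩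
      · simp only [sum_const, card_univ, Fintype.card_fin, nsmul_eq_mul, Nat.cast_add, Nat.cast_one]
        field_simp
      · rw [← Finset.smul_sum, sum_sarkariaLift, smul_zero]
  choose j hj using hg
  obtain ⟨w, ⟨hw0, hw1⟩, hwg⟩ := mem_convexHull_range_iff_exists_stdSimplex.1 hg0
  set A : Fin (m + 1) → Finset ι := fun k => {i | j i = k}
  set z : Fin (m + 1) → V × ℝ := fun k => ∑ i ∈ A k, w i • (x i, (1 : ℝ))
  have hz : ∀ k, z k = z (Fin.last m) := eq_last_of_sum_sarkariaLift_eq_zero <| by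
    calc ∑ k, sarkariaLift k (z k)
        = ∑ k, ∑ i ∈ A k, w i • sarkariaLift (j i) (x i, (1 : ℝ)) := by
          refine Finset.sum_congr rfl fun k _ => ?_
          simp only [z, map_sum, map_smul]
          exact Finset.sum_congr rfl fun i hi => by rw [(Finset.mem_filter.1 hi).2]
      _ = ∑ i, w i • g i := by rw [Finset.sum_fiberwise]; simp only [hj]
      _ = 0 := hwg
  have hA : ∀ k, ∑ i ∈ A k, w i = ∑ i ∈ A (Fin.last m), w i := fun k => by
    simpa [z, Prod.snd_sum] using congrArg Prod.snd (hz k)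
  have hAx : ∀ k, ∑ i ∈ A k, w i • x i = ∑ i ∈ A (Fin.last m), w i • x i := fun k => by
    simpa [z, Prod.fst_sum] using congrArg Prod.fst (hz k)
  have hApos : ∀ k, 0 < ∑ i ∈ A k, w i := fun k => by
    have : ∑ k : Fin (m + 1), ∑ i ∈ A k, w i = 1 := by rw [Finset.sum_fiberwise, hw1]
    simp only [hA k, hA _, Finset.sum_const, Finset.card_univ, Fintype.card_fin,
      nsmul_eq_mul] at this ⊢
    nlinarith
  refine ⟨j, (A (Fin.last m)).centerMass w x, fun k => ?_⟩
  have : (A k).centerMass w x ∈ convexHull ℝ (x '' {i | j i = k}) :=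
    (A k).centerMass_mem_convexHull (fun i _ => hw0 i) (hApos k)
      fun i hi => ⟨i, (Finset.mem_filter.1 hi).2, rfl⟩
  rwa [Finset.centerMass, hA, hAx] at this

end Sarkaria

lemma exists_eqOn_card_filter_le {α β : Type*} [DecidableEq α] [Fintype β] [DecidableEq β]
    {c : ℕ} {Y : Finset α} {φ : α → β} (hY : ∀ k, #{a ∈ Y | φ a = k} ≤ c) (D : Finset α)
    (hD : #(D ∪ Y) ≤ Fintype.card β * c) :
    ∃ ψ : α → β, Set.EqOn ψ φ Y ∧ ∀ k, #{a ∈ D ∪ Y | ψ a = k} ≤ c := by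
  induction D using Finset.induction_on with
  | empty => exact ⟨φ, fun _ _ => rfl, by simpa using hY⟩
  | insert a D _ ih =>
    obtain ⟨ψ, hψφ, hψ⟩ :=
      ih ((Finset.card_le_card (Finset.union_subset_union_left (subset_insert a D))).trans hD)
    rw [Finset.insert_union] at hD ⊢
    by_cases ha : a ∈ D ∪ Y
    · rw [Finset.insert_eq_of_mem ha]; exact ⟨ψ, hψφ, hψ⟩
    rw [card_insert_of_notMem ha] at hD
    obtain ⟨k₀, -, hk₀⟩ :=
      exists_card_fiber_lt_of_card_lt_mul (f := ψ) (t := univ) (by simpa using hD)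
    refine ⟨Function.update ψ a k₀, fun b hb => ?_, fun k => ?_⟩
    · rw [Function.update_of_ne (ne_of_mem_of_not_mem (Finset.mem_union_right D hb) ha)]
      exact hψφ hb
    rw [filter_insert, Function.update_self, filter_congr fun b hb => by
      rw [Function.update_of_ne (ne_of_mem_of_not_mem hb ha)]]
    split_ifs with hk
    · exact (card_insert_le _ _).trans (hk ▸ hk₀)
    · exact hψ k

theorem tverberg_small_parts_general (d r : ℕ) (hr : 1 ≤ r)
    (X : Finset (EuclideanSpace ℝ (Fin d)))
    (hcard₁ : (d + 1) * (r - 1) + 1 ≤ X.card)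
    (hcard₂ : X.card ≤ (d + 1) * r) :
    ∃ P : Fin r → Finset (EuclideanSpace ℝ (Fin d)),
      (∀ i j, i ≠ j → Disjoint (P i) (P j)) ∧
      (X : Set (EuclideanSpace ℝ (Fin d))) = ⋃ i, ↑(P i) ∧
      (∀ i, (P i).card ≤ d + 1) ∧
      ∃ o : EuclideanSpace ℝ (Fin d),
        ∀ i, o ∈ convexHull ℝ (↑(P i) : Set (EuclideanSpace ℝ (Fin d))) := by
  classical
  obtain ⟨m, rfl⟩ : ∃ m, r = m + 1 := ⟨r - 1, by omega⟩
  obtain ⟨j, o, ho⟩ := exists_tverberg_partition (m := m) ((↑) : X → EuclideanSpace ℝ (Fin d))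
    (by simp only [add_tsub_cancel_right] at hcard₁; simpa using hcard₁)
  choose t htX htcard hot using
    fun k => exists_finset_card_le_finrank_succ_of_mem_convexHull (ho k)
  set φ := Function.extend ((↑) : X → EuclideanSpace ℝ (Fin d)) j 0
  have hφ : ∀ k, ∀ a ∈ t k, a ∈ X ∧ φ a = k := fun k a ha => by
    obtain ⟨i, hi, rfl⟩ := htX k ha
    exact ⟨i.2, (Subtype.val_injective.extend_apply _ _ i).trans hi⟩
  set Y := univ.biUnion t
  have hYX : Y ⊆ X := biUnion_subset.2 fun k _ a ha => (hφ k a ha).1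
  have hY : ∀ k, #{a ∈ Y | φ a = k} ≤ d + 1 := fun k => by
    refine (Finset.card_le_card fun a ha => ?_).trans (by simpa using htcard k)
    obtain ⟨haY, rfl⟩ := mem_filter.1 ha
    obtain ⟨k', -, hak'⟩ := mem_biUnion.1 haY
    rwa [(hφ k' a hak').2]
  obtain ⟨ψ, hψφ, hψ⟩ := exists_eqOn_card_filter_le hY X (by
    rw [Finset.union_eq_left.2 hYX, Fintype.card_fin, mul_comm]; exact hcard₂)
  rw [Finset.union_eq_left.2 hYX] at hψ
  refine ⟨fun k => {a ∈ X | ψ a = k},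
    fun k k' hkk' => disjoint_filter.2 fun a _ h h' => hkk' (h ▸ h'), ?_, hψ, o,
    fun k => convexHull_mono ?_ (hot k)⟩
  · ext a; simp
  · intro a ha
    obtain ⟨haX, hφa⟩ := hφ k a ha
    simpa [haX, ← hφa] using hψφ (mem_biUnion.2 ⟨k, mem_univ k, ha⟩)

/-- Tverberg's theorem with parts of size at most `d+1`: if
`(d+1)(r-1)+1 ≤ |X| ≤ (d+1)r`, then `X` can be partitioned into `r` pairwise
disjoint sets, each of size at most `d+1`, whose convex hulls share a common
point. -/
theorem tverberg_small_parts (d r : ℕ) (hd : 1 ≤ d) (hr : 1 ≤ r)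
    (X : Finset (EuclideanSpace ℝ (Fin d)))
    (hcard₁ : (d + 1) * (r - 1) + 1 ≤ X.card)
    (hcard₂ : X.card ≤ (d + 1) * r) :
    ∃ P : Fin r → Finset (EuclideanSpace ℝ (Fin d)),
      (∀ i j, i ≠ j → Disjoint (P i) (P j)) ∧
      (X : Set (EuclideanSpace ℝ (Fin d))) = ⋃ i, ↑(P i) ∧
      (∀ i, (P i).card ≤ d + 1) ∧
      ∃ o : EuclideanSpace ℝ (Fin d),
        ∀ i, o ∈ convexHull ℝ (↑(P i) : Set (EuclideanSpace ℝ (Fin d))) :=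
  tverberg_small_parts_general d r hr X hcard₁ hcard₂
end

section
/- Let V ⊆ ℝ^d be a set of exactly 2(d+1) points in general position. Then there is at most one partition of V into two disjoint (d+1)-element sets F and G such that conv(F) ⊆ conv(G); namely, if such a nested partition exists, the outer set G must satisfy conv(G) = conv(V). -/
/-- A set `Y` of points in `ℝ^d` is in general position if every subset of size
at most `d+1` is affinely independent. -/
def InGeneralPosition (d : ℕ) (Y : Set (EuclideanSpace ℝ (Fin d))) : Prop :=
  ∀ s : Finset (EuclideanSpace ℝ (Fin d)), ↑s ⊆ Y → s.card ≤ d + 1 →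
    AffineIndependent ℝ (fun p : s => (p : EuclideanSpace ℝ (Fin d)))

/-!
If `conv F ⊆ conv G` then `conv G = conv (F ∪ G) = conv V`. By general position each outer set
`G` is affinely independent, and an affinely independent set is contained in every finite set
with the same convex hull: the extreme points of the common hull lie in both sets and (Krein–Milman
for polytopes) span the hull, so a point of the first set missing from the second would lie in
the affine span of the other points of the first. Hence any two outer sets coincide, and so do
their complements in `V`.
-/

open Set

section Polytope

variable {E : Type*} [AddCommGroup E] [Module ℝ E] [TopologicalSpace E] [T2Space E]
  [IsTopologicalAddGroup E] [ContinuousSMul ℝ E] [LocallyConvexSpace ℝ E]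

theorem Set.Finite.convexHull_extremePoints_convexHull {t : Set E} (ht : t.Finite) :
    convexHull ℝ ((convexHull ℝ t).extremePoints ℝ) = convexHull ℝ t := by
  have hfin : ((convexHull ℝ t).extremePoints ℝ).Finite :=
    ht.subset extremePoints_convexHull_subset
  simpa only [(hfin.isClosed_convexHull ℝ).closure_eq] using
    closure_convexHull_extremePoints (ht.isCompact_convexHull ℝ) (convex_convexHull ℝ t)

theorem AffineIndependent.subset_of_convexHull_eq {s t : Set E}
    (hs : AffineIndependent ℝ ((↑) : s → E)) (ht : t.Finite)
    (hst : convexHull ℝ s = convexHull ℝ t) : s ⊆ t := by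
  intro x hxs
  by_contra hxt
  have hext : (convexHull ℝ t).extremePoints ℝ ⊆ s \ {x} := fun y hy =>
    ⟨extremePoints_convexHull_subset (hst ▸ hy : y ∈ (convexHull ℝ s).extremePoints ℝ),
      fun hyx => hxt (hyx ▸ extremePoints_convexHull_subset hy)⟩
  have hx : x ∈ convexHull ℝ (s \ {x}) := convexHull_mono hext <| by
    rw [ht.convexHull_extremePoints_convexHull, ← hst]
    exact subset_convexHull ℝ s hxs
  refine hs.notMem_affineSpan_sdiff ⟨x, hxs⟩ univ (convexHull_subset_affineSpan _ ?_)
  convert hx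
  ext y
  simp

end Polytope

theorem convexHull_union_eq_right {E : Type*} [AddCommGroup E] [Module ℝ E] {s t : Set E}
    (hst : convexHull ℝ s ⊆ convexHull ℝ t) : convexHull ℝ (s ∪ t) = convexHull ℝ t :=
  (convexHull_min (union_subset ((subset_convexHull ℝ s).trans hst) (subset_convexHull ℝ t))
    (convex_convexHull ℝ t)).antisymm (convexHull_mono subset_union_right)

theorem nested_partition_unique_general (d : ℕ)
    (V : Finset (EuclideanSpace ℝ (Fin d)))
    (hgp : InGeneralPosition d (↑V : Set (EuclideanSpace ℝ (Fin d)))) :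
    (∀ F G F' G' : Finset (EuclideanSpace ℝ (Fin d)),
      (Disjoint F G ∧ (↑F ∪ ↑G : Set (EuclideanSpace ℝ (Fin d))) = ↑V ∧ F.card = d + 1 ∧ G.card = d + 1 ∧
        convexHull ℝ (↑F : Set (EuclideanSpace ℝ (Fin d))) ⊆
          convexHull ℝ (↑G : Set (EuclideanSpace ℝ (Fin d)))) →
      (Disjoint F' G' ∧ (↑F' ∪ ↑G' : Set (EuclideanSpace ℝ (Fin d))) = ↑V ∧ F'.card = d + 1 ∧ G'.card = d + 1 ∧
        convexHull ℝ (↑F' : Set (EuclideanSpace ℝ (Fin d))) ⊆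
          convexHull ℝ (↑G' : Set (EuclideanSpace ℝ (Fin d)))) →
      F = F' ∧ G = G') ∧
    (∀ F G : Finset (EuclideanSpace ℝ (Fin d)),
      Disjoint F G → (↑F ∪ ↑G : Set (EuclideanSpace ℝ (Fin d))) = ↑V → F.card = d + 1 → G.card = d + 1 →
      convexHull ℝ (↑F : Set (EuclideanSpace ℝ (Fin d))) ⊆
        convexHull ℝ (↑G : Set (EuclideanSpace ℝ (Fin d))) →
      convexHull ℝ (↑G : Set (EuclideanSpace ℝ (Fin d))) =
        convexHull ℝ (↑V : Set (EuclideanSpace ℝ (Fin d)))) := by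
  refine ⟨?_, fun F G _ hFG _ _ hsub => hFG ▸ (convexHull_union_eq_right hsub).symm⟩
  rintro F G F' G' ⟨hd, hFG, -, hG, hsub⟩ ⟨hd', hFG', -, hG', hsub'⟩
  have hV : F ∪ G = V := Finset.coe_inj.1 (by simpa using hFG)
  have hV' : F' ∪ G' = V := Finset.coe_inj.1 (by simpa using hFG')
  have hull_eq :
      convexHull ℝ (G : Set (EuclideanSpace ℝ (Fin d))) = convexHull ℝ (G' : Set _) := by
    rw [← convexHull_union_eq_right hsub, ← convexHull_union_eq_right hsub', hFG, hFG']
  have hGG' : G = G' := Finset.coe_inj.1 <| subset_antisymm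
    ((hgp G (hFG ▸ subset_union_right) hG.le).subset_of_convexHull_eq G'.finite_toSet hull_eq)
    ((hgp G' (hFG' ▸ subset_union_right) hG'.le).subset_of_convexHull_eq G.finite_toSet
      hull_eq.symm)
  refine ⟨?_, hGG'⟩
  rw [← Finset.union_sdiff_cancel_right hd, ← Finset.union_sdiff_cancel_right hd', hV, hV', hGG']

/-- If `V ⊆ ℝ^d` consists of exactly `2(d+1)` points in general position, then
there is at most one partition of `V` into disjoint `(d+1)`-element sets `F, G`
with `conv(F) ⊆ conv(G)`; moreover, for any such nested partition the outer set
`G` satisfies `conv(G) = conv(V)`. -/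
theorem nested_partition_unique (d : ℕ)
    (V : Finset (EuclideanSpace ℝ (Fin d))) (hV : V.card = 2 * (d + 1))
    (hgp : InGeneralPosition d (↑V : Set (EuclideanSpace ℝ (Fin d)))) :
    (∀ F G F' G' : Finset (EuclideanSpace ℝ (Fin d)),
      (Disjoint F G ∧ (↑F ∪ ↑G : Set (EuclideanSpace ℝ (Fin d))) = ↑V ∧ F.card = d + 1 ∧ G.card = d + 1 ∧
        convexHull ℝ (↑F : Set (EuclideanSpace ℝ (Fin d))) ⊆
          convexHull ℝ (↑G : Set (EuclideanSpace ℝ (Fin d)))) →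
      (Disjoint F' G' ∧ (↑F' ∪ ↑G' : Set (EuclideanSpace ℝ (Fin d))) = ↑V ∧ F'.card = d + 1 ∧ G'.card = d + 1 ∧
        convexHull ℝ (↑F' : Set (EuclideanSpace ℝ (Fin d))) ⊆
          convexHull ℝ (↑G' : Set (EuclideanSpace ℝ (Fin d)))) →
      F = F' ∧ G = G') ∧
    (∀ F G : Finset (EuclideanSpace ℝ (Fin d)),
      Disjoint F G → (↑F ∪ ↑G : Set (EuclideanSpace ℝ (Fin d))) = ↑V → F.card = d + 1 → G.card = d + 1 →
      convexHull ℝ (↑F : Set (EuclideanSpace ℝ (Fin d))) ⊆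
        convexHull ℝ (↑G : Set (EuclideanSpace ℝ (Fin d))) →
      convexHull ℝ (↑G : Set (EuclideanSpace ℝ (Fin d))) =
        convexHull ℝ (↑V : Set (EuclideanSpace ℝ (Fin d)))) :=
  nested_partition_unique_general d V hgp
end

section
/- Let T and T' be two disjoint (d+1)-element sets of points in ℝ^d such that T ∪ T' is in general position, and suppose conv(T) ⊆ conv(T'). Then conv(T') is volume-wise the unique largest d-dimensional simplex spanned by d+1 of the points of T ∪ T': for every (d+1)-element subset S of T ∪ T' with S ≠ T', the d-dimensional Lebesgue measure of conv(S) is strictly smaller than the d-dimensional Lebesgue measure of conv(T'). -/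
open MeasureTheory

open Set

/-!
All points of `S` lie in the simplex `conv T'` (those of `T` because `conv T ⊆ conv T'`), so
`conv S ⊆ conv T'`. As `S ≠ T'` have the same size, some vertex `v` of `T'` is not in `S`. The
barycentric coordinate of `v` with respect to `T'` is affine, at most `1` on `conv T'` and equal to
`1` there only at `v`; so it is `< 1` on `conv S`, and `v ∉ conv S`. A convex body is the closure
of its nonempty interior, so the compact set `conv S` then misses a nonempty open subset of
`conv T'`, which has positive volume.
-/

namespace AffineBasis

variable {ι R E : Type*} [Field R] [LinearOrder R] [IsStrictOrderedRing R]
  [AddCommGroup E] [Module R E] (b : AffineBasis ι R E)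

theorem coord_nonneg_of_mem_convexHull {x : E} (hx : x ∈ convexHull R (range b)) (i : ι) :
    0 ≤ b.coord i x := by
  rw [b.convexHull_eq_nonneg_coord] at hx
  exact hx i

theorem eq_of_mem_convexHull_of_coord_eq_one [Fintype ι] {x : E} {i : ι}
    (hx : x ∈ convexHull R (range b)) (hi : b.coord i x = 1) : x = b i := by
  classical
  have hsum : b.coord i x + ∑ j ∈ Finset.univ.erase i, b.coord j x = 1 := by
    rw [Finset.add_sum_erase Finset.univ (fun j => b.coord j x) (Finset.mem_univ i),
      b.sum_coord_apply_eq_one]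
  have hrest : ∀ j ∈ Finset.univ.erase i, b.coord j x = 0 :=
    (Finset.sum_eq_zero_iff_of_nonneg fun j _ => b.coord_nonneg_of_mem_convexHull hx j).1
      (by linarith)
  refine b.ext_elem fun j => ?_
  obtain rfl | hj := eq_or_ne j i
  · rw [hi, b.coord_apply_eq]
  · rw [hrest j (Finset.mem_erase.2 ⟨hj, Finset.mem_univ j⟩), b.coord_apply_ne hj]

theorem notMem_convexHull_of_subset_convexHull [Fintype ι] {s : Set E} {i : ι}
    (hs : s ⊆ convexHull R (range b)) (hi : b i ∉ s) : b i ∉ convexHull R s := by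
  have hlt : convexHull R s ⊆ {x | b.coord i x < 1} := by
    refine convexHull_min (fun x hx => ?_) ((convex_Iio 1).affine_preimage (b.coord i))
    have hle : b.coord i x ≤ 1 :=
      calc b.coord i x ≤ ∑ j, b.coord j x :=
            Finset.single_le_sum (fun j _ => b.coord_nonneg_of_mem_convexHull (hs hx) j)
              (Finset.mem_univ i)
        _ = 1 := b.sum_coord_apply_eq_one x
    refine hle.lt_of_ne fun h => hi ?_
    rwa [← b.eq_of_mem_convexHull_of_coord_eq_one (hs hx) h]
  intro h
  simpa [b.coord_apply_eq] using hlt h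

end AffineBasis

section Measure

variable {E : Type*} [NormedAddCommGroup E] [NormedSpace ℝ E] [MeasurableSpace E] [BorelSpace E]
  (μ : Measure E) [μ.IsOpenPosMeasure] [IsFiniteMeasureOnCompacts μ]

theorem Convex.measure_lt_of_isCompact_subset {K C : Set E} (hC : Convex ℝ C)
    (hCint : (interior C).Nonempty) (hK : IsCompact K) (hKC : K ⊆ C) (hCK : ¬C ⊆ K) :
    μ K < μ C := by
  have hopen : (interior C \ K).Nonempty := by
    by_contra! h
    refine hCK (subset_closure.trans ?_)
    rw [← hC.closure_interior_eq_closure_of_nonempty_interior hCint]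
    exact closure_minimal (sdiff_eq_empty.1 h) hK.isClosed
  have hU : IsOpen (interior C \ K) := isOpen_interior.sdiff hK.isClosed
  calc μ K < μ K + μ (interior C \ K) :=
        ENNReal.lt_add_right hK.measure_lt_top.ne (hU.measure_ne_zero μ hopen)
    _ = μ (K ∪ (interior C \ K)) := (measure_union disjoint_sdiff_right hU.measurableSet).symm
    _ ≤ μ C := measure_mono (union_subset hKC (sdiff_subset.trans interior_subset))

variable [FiniteDimensional ℝ E]

theorem AffineIndependent.measure_convexHull_lt {s t : Finset E}
    (ht : AffineIndependent ℝ ((↑) : t → E)) (hcard : t.card = Module.finrank ℝ E + 1)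
    (hst : ↑s ⊆ convexHull ℝ (t : Set E)) (hts : ¬t ⊆ s) :
    μ (convexHull ℝ (s : Set E)) < μ (convexHull ℝ (t : Set E)) := by
  have hrange : range ((↑) : t → E) = t := Subtype.range_coe
  have hspan : affineSpan ℝ (range ((↑) : t → E)) = ⊤ := by
    rw [ht.affineSpan_eq_top_iff_card_eq_finrank_add_one, Fintype.card_coe, hcard]
  let b : AffineBasis t ℝ E := ⟨(↑), ht, hspan⟩
  obtain ⟨v, hvt, hvs⟩ := Finset.not_subset.1 hts
  refine (convex_convexHull ℝ _).measure_lt_of_isCompact_subset μ ?_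
    (s.finite_toSet.isCompact_convexHull ℝ) (convexHull_min hst (convex_convexHull ℝ _)) ?_
  · rw [interior_convexHull_nonempty_iff_affineSpan_eq_top, ← hrange, hspan]
  · intro h
    refine b.notMem_convexHull_of_subset_convexHull (i := ⟨v, hvt⟩) ?_ hvs
      (h (subset_convexHull ℝ _ hvt))
    rwa [show range b = t from hrange]

end Measure

theorem outer_simplex_unique_max_volume_general (d : ℕ)
    (T T' : Finset (EuclideanSpace ℝ (Fin d)))
    (hT' : T'.card = d + 1)
    (hgp : InGeneralPosition d ((↑T ∪ ↑T' : Set (EuclideanSpace ℝ (Fin d)))))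
    (hnested : convexHull ℝ (↑T : Set (EuclideanSpace ℝ (Fin d))) ⊆
      convexHull ℝ (↑T' : Set (EuclideanSpace ℝ (Fin d)))) :
    ∀ S : Finset (EuclideanSpace ℝ (Fin d)),
      (↑S : Set (EuclideanSpace ℝ (Fin d))) ⊆ ↑T ∪ ↑T' → S.card = d + 1 → S ≠ T' →
      volume (convexHull ℝ (↑S : Set (EuclideanSpace ℝ (Fin d)))) <
        volume (convexHull ℝ (↑T' : Set (EuclideanSpace ℝ (Fin d)))) := by
  intro S hST hS hST'
  have hT'indep := hgp T' subset_union_right hT'.le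
  have hSconv : (S : Set (EuclideanSpace ℝ (Fin d))) ⊆ convexHull ℝ (T' : Set _) :=
    hST.trans (union_subset ((subset_convexHull ℝ _).trans hnested) (subset_convexHull ℝ _))
  have hT'S : ¬T' ⊆ S := fun h => hST' (Finset.eq_of_subset_of_card_le h (by rw [hS, hT'])).symm
  exact hT'indep.measure_convexHull_lt volume (by rw [hT', finrank_euclideanSpace_fin]) hSconv hT'S

/-- If `T, T'` are disjoint `(d+1)`-element sets in `ℝ^d` with `T ∪ T'` in
general position and `conv(T) ⊆ conv(T')`, then `conv(T')` is volume-wise the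
unique largest simplex spanned by `d+1` of the points of `T ∪ T'`: every other
`(d+1)`-element subset `S` of `T ∪ T'` spans a simplex of strictly smaller
`d`-dimensional Lebesgue measure. -/
theorem outer_simplex_unique_max_volume (d : ℕ) (hd : 1 ≤ d)
    (T T' : Finset (EuclideanSpace ℝ (Fin d)))
    (hT : T.card = d + 1) (hT' : T'.card = d + 1) (hdisj : Disjoint T T')
    (hgp : InGeneralPosition d ((↑T ∪ ↑T' : Set (EuclideanSpace ℝ (Fin d)))))
    (hnested : convexHull ℝ (↑T : Set (EuclideanSpace ℝ (Fin d))) ⊆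
      convexHull ℝ (↑T' : Set (EuclideanSpace ℝ (Fin d)))) :
    ∀ S : Finset (EuclideanSpace ℝ (Fin d)),
      (↑S : Set (EuclideanSpace ℝ (Fin d))) ⊆ ↑T ∪ ↑T' → S.card = d + 1 → S ≠ T' →
      volume (convexHull ℝ (↑S : Set (EuclideanSpace ℝ (Fin d)))) <
        volume (convexHull ℝ (↑T' : Set (EuclideanSpace ℝ (Fin d)))) :=
  outer_simplex_unique_max_volume_general d T T' hT' hgp hnested
end
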